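/- For integers k ≥ 0 and n ≥ k+1, op_{n+1,k+1}^{k+2} = op_{n,k}^{k+1} + op_{n,k+1}^{k+1} + op_{n,k+1}^{k+2}. -/

import Mathlib

/-- The first unoccupied parking space `j` with `p ≤ j ≤ n`, if any. -/
def firstFree (n : ℕ) (occ : Finset ℕ) (p : ℕ) : Option ℕ :=
  (List.range' p (n + 1 - p)).find? (fun j => decide (j ∉ occ))

/-- Number of cars that fail to park, processing the preference list in order,
given the set of already occupied spaces. -/
def flawsFrom (n : ℕ) : List ℕ → Finset ℕ → ℕ
  | [], _ => 0
  | p :: rest, occ =>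
    match firstFree n occ p with
    | none => flawsFrom n rest occ + 1
    | some j => flawsFrom n rest (insert j occ)

/-- The number of flaws (unparked cars) of a preference list of length `n`. -/
def flaws (n : ℕ) (a : List ℕ) : ℕ := flawsFrom n a ∅

/-- A preference set of length `n`: a list of length `n` with entries in `{1, …, n}`. -/
def IsPrefSet (n : ℕ) (a : List ℕ) : Prop :=
  a.length = n ∧ ∀ x ∈ a, 1 ≤ x ∧ x ≤ n

/-- An ordered preference set of length `n`: a nondecreasing preference set. -/
def IsOrderedPrefSet (n : ℕ) (a : List ℕ) : Prop :=
  IsPrefSet n a ∧ a.Pairwise (· ≤ ·)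

/-- `op_{n,≥k}`: number of ordered preference sets of length `n` with at least `k` flaws. -/
noncomputable def opGe (n k : ℕ) : ℕ :=
  {a : List ℕ | IsOrderedPrefSet n a ∧ k ≤ flaws n a}.ncard

/-- `op_{n,≤k}`: number of ordered preference sets of length `n` with at most `k` flaws. -/
noncomputable def opLe (n k : ℕ) : ℕ :=
  {a : List ℕ | IsOrderedPrefSet n a ∧ flaws n a ≤ k}.ncard

/-- `op_{n,k}`: number of ordered preference sets of length `n` with exactly `k` flaws. -/
noncomputable def opEq (n k : ℕ) : ℕ :=
  {a : List ℕ | IsOrderedPrefSet n a ∧ flaws n a = k}.ncard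

/-- `op_{n,≥k,≤l}`: at least `k` flaws, every entry at most `l`. -/
noncomputable def opGeLe (n k l : ℕ) : ℕ :=
  {a : List ℕ | IsOrderedPrefSet n a ∧ k ≤ flaws n a ∧ ∀ x ∈ a, x ≤ l}.ncard

/-- `op_{n,≥k,≤l}^m`: at least `k` flaws, every entry at most `l`, leading term `m`. -/
noncomputable def opGeLeLead (n k l m : ℕ) : ℕ :=
  {a : List ℕ | IsOrderedPrefSet n a ∧ k ≤ flaws n a ∧ (∀ x ∈ a, x ≤ l) ∧
    a.head? = some m}.ncard

/-- `op_{n,k,≤l}^m`: exactly `k` flaws, every entry at most `l`, leading term `m`. -/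
noncomputable def opEqLeLead (n k l m : ℕ) : ℕ :=
  {a : List ℕ | IsOrderedPrefSet n a ∧ flaws n a = k ∧ (∀ x ∈ a, x ≤ l) ∧
    a.head? = some m}.ncard

/-- `op_{n,k}^m`: exactly `k` flaws, leading term `m`. -/
noncomputable def opLead (n k m : ℕ) : ℕ :=
  {a : List ℕ | IsOrderedPrefSet n a ∧ flaws n a = k ∧ a.head? = some m}.ncard

/-- `op_{n,k,=l}^m`: exactly `k` flaws, maximal entry exactly `l`, leading term `m`. -/
noncomputable def opMaxLead (n k l m : ℕ) : ℕ :=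
  {a : List ℕ | IsOrderedPrefSet n a ∧ flaws n a = k ∧ (∀ x ∈ a, x ≤ l) ∧ l ∈ a ∧
    a.head? = some m}.ncard

/-- Binomial coefficient `C(a, b)` with an integer lower index, which is `0`
when `b < 0` (the standard convention). -/
def chooseInt (a : ℕ) (b : ℤ) : ℕ := if 0 ≤ b then a.choose b.toNat else 0

/-!
For a nondecreasing preference list the occupied spaces at or above the current preference form
a run ending at the last occupied space `s`, so each car parks at `max x (s + 1)` and, once one
car fails, all later ones fail; this is `sortedFlaws`. In this model, declaring the spaces up to
`s` occupied in advance only imposes the obvious lower bound: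
`sortedFlaws N l s = max (sortedFlaws N l 0) (l.length - (N - s))`.

Removing the leading `k + 2` of a set counted by `op_{n+1,k+1}^{k+2}` and lowering the other
entries by one is a bijection onto the ordered preference sets `b` of length `n` with entries
`≥ k + 1` and `max (flaws b) (k + 1) = k + 1`. As a set with leading term `h` leaves spaces
`1, …, h - 1` empty, it has at least `h - 1` flaws, so these `b` are exactly the sets counted by
`op_{n,k}^{k+1}`, `op_{n,k+1}^{k+1}` and `op_{n,k+1}^{k+2}`.
-/

def sortedFlaws (N : ℕ) : List ℕ → ℕ → ℕ
  | [], _ => 0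
  | x :: l, s => if max x (s + 1) ≤ N then sortedFlaws N l (max x (s + 1)) else l.length + 1

lemma sortedFlaws_le_length (N : ℕ) : ∀ (l : List ℕ) (s : ℕ), sortedFlaws N l s ≤ l.length
  | [], _ => le_rfl
  | x :: l, s => by
    have := sortedFlaws_le_length N l (max x (s + 1))
    simp only [sortedFlaws, List.length_cons]
    split <;> omega

lemma sortedFlaws_cons_of_lt (N : ℕ) {x s : ℕ} (l : List ℕ) (h : s < x) :
    sortedFlaws N (x :: l) s = if x ≤ N then sortedFlaws N l x else l.length + 1 := by
  simp only [sortedFlaws, max_eq_left (Nat.succ_le_of_lt h)]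

lemma sortedFlaws_eq_max (N : ℕ) : ∀ (l : List ℕ) (s : ℕ),
    sortedFlaws N l s = max (sortedFlaws N l 0) (l.length - (N - s))
  | [], _ => by simp [sortedFlaws]
  | x :: l, s => by
    have ih := sortedFlaws_eq_max N l
    have hs := ih (max x (s + 1))
    have h0 := ih (max x 1)
    have hle := sortedFlaws_le_length N l
    have := hle (max x (s + 1))
    have := hle (max x 1)
    simp only [sortedFlaws, List.length_cons, zero_add]
    split_ifs <;> omega

lemma sortedFlaws_map_succ (N : ℕ) : ∀ (l : List ℕ) (s : ℕ),
    sortedFlaws (N + 1) (l.map (· + 1)) (s + 1) = sortedFlaws N l s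
  | [], _ => rfl
  | x :: l, s => by
    have ih := sortedFlaws_map_succ N l (max x (s + 1))
    simp only [List.map_cons, sortedFlaws, List.length_map, Nat.add_max_add_right,
      Nat.add_le_add_iff_right, ih]

lemma firstFree_of_occupied (N : ℕ) {occ : Finset ℕ} {p s : ℕ}
    (hocc : ∀ j, p ≤ j → j ≤ s → j ∈ occ) (hfree : ∀ j, s < j → j ∉ occ) :
    firstFree N occ p = if max p (s + 1) ≤ N then some (max p (s + 1)) else none := by
  unfold firstFree
  split_ifs with h
  · simp only [List.find?_range'_eq_some, List.mem_range'_1, decide_eq_true_eq, Bool.not_eq_true',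
      decide_eq_false_iff_not, not_not]
    exact ⟨hfree _ (by omega), by omega, fun j hj hj' => hocc j hj (by omega)⟩
  · simp only [List.find?_range'_eq_none, decide_not, Bool.not_not, decide_eq_true_eq]
    exact fun j hj hj' => hocc j hj (by omega)

lemma flawsFrom_eq_sortedFlaws (N : ℕ) : ∀ (l : List ℕ) {x₀ s : ℕ} {occ : Finset ℕ},
    l.Pairwise (· ≤ ·) → (∀ y ∈ l, x₀ ≤ y) → (∀ j, x₀ ≤ j → j ≤ s → j ∈ occ) →
    (∀ j, s < j → j ∉ occ) → flawsFrom N l occ = sortedFlaws N l s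
  | [], _, _, _, _, _, _, _ => rfl
  | x :: l, x₀, s, occ, hsort, hlb, hocc, hfree => by
    obtain ⟨hxl, hl⟩ := List.pairwise_cons.mp hsort
    have hx₀ : x₀ ≤ x := hlb x List.mem_cons_self
    have hoccx : ∀ j, x ≤ j → j ≤ s → j ∈ occ := fun j hj hj' => hocc j (hx₀.trans hj) hj'
    simp only [flawsFrom, firstFree_of_occupied N hoccx hfree, sortedFlaws]
    split_ifs with h
    · refine flawsFrom_eq_sortedFlaws N l hl hxl (fun j hj hj' => ?_) (fun j hj => ?_)
      · rcases hj'.lt_or_eq with hj' | rfl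
        · exact Finset.mem_insert_of_mem (hoccx j hj (by omega))
        · exact Finset.mem_insert_self _ _
      · simp only [Finset.mem_insert, not_or]
        exact ⟨by omega, hfree j (by omega)⟩
    · rw [flawsFrom_eq_sortedFlaws N l hl hxl hoccx hfree]
      cases l with
      | nil => rfl
      | cons y l =>
        have hy := hxl y List.mem_cons_self
        simp only [sortedFlaws, List.length_cons]
        rw [if_neg (by omega)]

lemma flaws_eq_sortedFlaws (N : ℕ) {l : List ℕ} (hsort : l.Pairwise (· ≤ ·))
    (hpos : ∀ y ∈ l, 1 ≤ y) : flaws N l = sortedFlaws N l 0 :=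
  flawsFrom_eq_sortedFlaws N l hsort hpos (fun j hj hj' => by omega)
    (fun j _ => Finset.notMem_empty j)

lemma flaws_cons_map_succ {N k : ℕ} {b : List ℕ} (hk : k + 1 ≤ N)
    (hsort : b.Pairwise (· ≤ ·)) (hb : ∀ y ∈ b, k + 1 ≤ y) :
    flaws (N + 1) ((k + 2) :: b.map (· + 1)) = max (flaws N b) (b.length - (N - (k + 1))) := by
  have hsort' : ((k + 2) :: b.map (· + 1)).Pairwise (· ≤ ·) := by
    refine List.pairwise_cons.mpr ⟨?_, hsort.map _ fun _ _ h => by omega⟩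
    simpa using fun y hy => hb y hy
  have hpos' : ∀ y ∈ (k + 2) :: b.map (· + 1), 1 ≤ y := by simp
  rw [flaws_eq_sortedFlaws _ hsort' hpos', sortedFlaws_cons_of_lt _ _ (Nat.succ_pos _),
    if_pos (by omega), sortedFlaws_map_succ, sortedFlaws_eq_max,
    flaws_eq_sortedFlaws N hsort fun y hy => le_trans (by omega) (hb y hy)]

lemma head_sub_one_le_flaws {n h : ℕ} {t : List ℕ} (ha : IsOrderedPrefSet n (h :: t)) :
    h - 1 ≤ flaws n (h :: t) := by
  obtain ⟨⟨hlen, hmem⟩, hsort⟩ := ha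
  have hh := hmem h List.mem_cons_self
  have hshift : sortedFlaws n (h :: t) (h - 1) = sortedFlaws n (h :: t) 0 := by
    rw [sortedFlaws_cons_of_lt _ _ (by omega), sortedFlaws_cons_of_lt _ _ (by omega)]
  have hmax := sortedFlaws_eq_max n (h :: t) (h - 1)
  rw [flaws_eq_sortedFlaws n hsort fun y hy => (hmem y hy).1]
  omega

lemma isOrderedPrefSet_cons_map_succ_iff {n k : ℕ} {b : List ℕ} (hk : k + 1 ≤ n) :
    IsOrderedPrefSet (n + 1) ((k + 2) :: b.map (· + 1)) ↔
      IsOrderedPrefSet n b ∧ ∀ y ∈ b, k + 1 ≤ y := by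
  simp only [IsOrderedPrefSet, IsPrefSet, List.length_cons, List.length_map,
    Nat.add_right_cancel_iff, List.mem_cons, List.mem_map, forall_eq_or_imp, le_add_iff_nonneg_left,
    zero_le, Nat.reduceLeDiff, Order.add_one_le_iff, true_and, forall_exists_index, and_imp,
    forall_apply_eq_imp_iff₂, add_le_add_iff_right, List.pairwise_cons, List.pairwise_map]
  constructor
  · rintro ⟨⟨hlen, -, hle⟩, hlt, hsort⟩
    exact ⟨⟨⟨hlen, fun x hx => ⟨Nat.one_le_of_lt (hlt x hx), hle x hx⟩⟩, hsort⟩, hlt⟩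
  · rintro ⟨⟨⟨hlen, hmem⟩, hsort⟩, hlt⟩
    exact ⟨⟨hlen, hk, fun x hx => (hmem x hx).2⟩, hlt, hsort⟩

lemma exists_map_succ_eq {t : List ℕ} (h : ∀ y ∈ t, 1 ≤ y) : ∃ b : List ℕ, b.map (· + 1) = t :=
  ⟨t.map (· - 1), by
    rw [List.map_map]
    exact (List.map_congr_left fun y hy => Nat.sub_add_cancel (h y hy)).trans t.map_id⟩

lemma finite_setOf_length_eq_forall_le (n N : ℕ) :
    {a : List ℕ | a.length = n ∧ ∀ x ∈ a, x ≤ N}.Finite := by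
  refine ((List.finite_length_eq (Set.Iic N) n).image (List.map Subtype.val)).subset ?_
  rintro a ⟨hlen, hle⟩
  lift a to List (Set.Iic N) using hle
  exact ⟨a, by simpa using hlen, rfl⟩

def leadSet (n k m : ℕ) : Set (List ℕ) :=
  {a | IsOrderedPrefSet n a ∧ flaws n a = k ∧ a.head? = some m}

lemma opLead_eq_ncard_leadSet (n k m : ℕ) : opLead n k m = (leadSet n k m).ncard := rfl

lemma leadSet_finite (n k m : ℕ) : (leadSet n k m).Finite :=
  (finite_setOf_length_eq_forall_le n n).subset
    fun _ ⟨⟨⟨hlen, hmem⟩, _⟩, _⟩ => ⟨hlen, fun x hx => (hmem x hx).2⟩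

lemma disjoint_leadSet {n k k' m m' : ℕ} (h : k ≠ k' ∨ m ≠ m') :
    Disjoint (leadSet n k m) (leadSet n k' m') := by
  refine Set.disjoint_left.mpr fun a ⟨_, hk, hm⟩ ⟨_, hk', hm'⟩ => ?_
  rcases h with h | h
  · exact h (hk.symm.trans hk')
  · exact h (Option.some_injective _ (hm.symm.trans hm'))

lemma leadSet_succ_eq_image {n k : ℕ} (hk : k + 1 ≤ n) :
    leadSet (n + 1) (k + 1) (k + 2) = (fun b => (k + 2) :: b.map (· + 1)) ''
      {b | IsOrderedPrefSet n b ∧ (∀ y ∈ b, k + 1 ≤ y) ∧ flaws n b ≤ k + 1} := by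
  ext a
  constructor
  · rintro ⟨ha, hfl, hhead⟩
    obtain ⟨t, rfl⟩ : ∃ t, a = (k + 2) :: t := by
      cases a with
      | nil => simp at hhead
      | cons x t => exact ⟨t, by simpa using hhead⟩
    obtain ⟨b, rfl⟩ := exists_map_succ_eq fun y hy => (ha.1.2 y (List.mem_cons_of_mem _ hy)).1
    obtain ⟨hb, hbk⟩ := (isOrderedPrefSet_cons_map_succ_iff hk).mp ha
    rw [flaws_cons_map_succ hk hb.2 hbk, hb.1.1] at hfl
    exact ⟨b, ⟨hb, hbk, by omega⟩, rfl⟩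
  · rintro ⟨b, ⟨hb, hbk, hfl⟩, rfl⟩
    refine ⟨(isOrderedPrefSet_cons_map_succ_iff hk).mpr ⟨hb, hbk⟩, ?_, rfl⟩
    rw [flaws_cons_map_succ hk hb.2 hbk, hb.1.1]
    omega

lemma setOf_flaws_le_eq_union {n k : ℕ} (hk : k + 1 ≤ n) :
    {b | IsOrderedPrefSet n b ∧ (∀ y ∈ b, k + 1 ≤ y) ∧ flaws n b ≤ k + 1} =
      leadSet n k (k + 1) ∪ leadSet n (k + 1) (k + 1) ∪ leadSet n (k + 1) (k + 2) := by
  ext b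
  rcases b with _ | ⟨h, t⟩
  · simp only [leadSet, IsOrderedPrefSet, IsPrefSet, List.length_nil, List.not_mem_nil,
      IsEmpty.forall_iff, implies_true, and_true, List.Pairwise.nil, Set.mem_ofPred_eq,
      Set.mem_union, List.head?_nil, reduceCtorEq, and_false, or_self, iff_false]
    omega
  simp only [leadSet, Set.mem_union, Set.mem_ofPred_eq, List.head?_cons, Option.some.injEq]
  constructor
  · rintro ⟨hb, hbk, hfl⟩
    have := head_sub_one_le_flaws hb
    have := hbk h List.mem_cons_self
    simp only [hb, true_and]
    omega
  · intro hb'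
    have hb : IsOrderedPrefSet n (h :: t) := by
      rcases hb' with (⟨hb, -⟩ | ⟨hb, -⟩) | ⟨hb, -⟩ <;> exact hb
    have hhead : ∀ y ∈ h :: t, h ≤ y := by
      rintro y (_ | ⟨_, hy⟩)
      · exact le_rfl
      · exact List.rel_of_pairwise_cons hb.2 hy
    simp only [hb, true_and] at hb'
    exact ⟨hb, fun y hy => le_trans (by omega) (hhead y hy), by omega⟩

theorem stmt14 (n k : ℕ) (hn : k + 1 ≤ n) :
    opLead (n + 1) (k + 1) (k + 2)
      = opLead n k (k + 1) + opLead n (k + 1) (k + 1) + opLead n (k + 1) (k + 2) := by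
  have hinj : Function.Injective fun b : List ℕ => (k + 2) :: b.map (· + 1) :=
    fun b b' h => List.map_injective_iff.mpr (add_left_injective 1) (List.cons.inj h).2
  simp only [opLead_eq_ncard_leadSet]
  rw [leadSet_succ_eq_image hn, Set.ncard_image_of_injective _ hinj, setOf_flaws_le_eq_union hn,
    Set.ncard_union_eq ((disjoint_leadSet (by omega)).union_left (disjoint_leadSet (by omega)))
      ((leadSet_finite ..).union (leadSet_finite ..)) (leadSet_finite ..),
    Set.ncard_union_eq (disjoint_leadSet (by omega)) (leadSet_finite ..) (leadSet_finite ..)]
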